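/- arXiv:2404.04368 — 2 statements merged into one kernel-verified Lean document; each statement's English description precedes it below -/
import Mathlib

section
/- Let R be a nontrivial commutative ring, I an ideal of R, and d, n ≥ 1 with D = d + n. For every primitive d-lattice Λ in R^D with Λ ⊆ R^d × I^n, there exists g in the Hecke congruence subgroup Γ_I such that g(R^d × {0}) = Λ. In particular, Γ_I acts transitively on the set of primitive d-lattices in R^D that are contained in R^d × I^n. -/
/-!
Choose bases of `Λ` and of the free quotient `R^D ⧸ Λ`; lifting the latter gives a basis of
`R^D` whose first `d` vectors form a basis of `Λ`. The matrix with these columns has unit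
determinant, and rescaling column `d`, one of the lifted quotient vectors, by the inverse of
that unit gives a matrix of determinant one. It maps `R^d × {0}` onto `Λ`, and its lower left block
lies in `I` because its first `d` columns lie in `Λ ⊆ R^d × I^n`.
-/

/-- The `R`-submodule `R^d × {0}` of `R^(d+n)` generated by the first `d`
standard basis vectors, i.e. the vectors whose last `n` coordinates vanish. -/
def stdLattice (R : Type*) [CommRing R] (d n : ℕ) : Submodule R (Fin (d + n) → R) where
  carrier := {x | ∀ i : Fin (d + n), d ≤ (i : ℕ) → x i = 0}
  add_mem' := fun ha hb i hi => by simp [ha i hi, hb i hi]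
  zero_mem' := fun i _ => rfl
  smul_mem' := fun c x hx i hi => by simp [hx i hi]

/-- The `R`-submodule `R^d × I^n` of `R^(d+n)`: vectors whose last `n` coordinates
lie in the ideal `I`. -/
def stdLatticeMod (R : Type*) [CommRing R] (I : Ideal R) (d n : ℕ) :
    Submodule R (Fin (d + n) → R) where
  carrier := {x | ∀ i : Fin (d + n), d ≤ (i : ℕ) → x i ∈ I}
  add_mem' := fun ha hb i hi => I.add_mem (ha i hi) (hb i hi)
  zero_mem' := fun i _ => I.zero_mem
  smul_mem' := fun c x hx i hi => by simpa using I.mul_mem_left c (hx i hi)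

/-- A submodule `Λ` of `R^(d+n)` is a primitive `d`-lattice if it is a free
`R`-module of rank `d` and the quotient module is a free `R`-module of rank `n`. -/
def IsPrimitiveLattice (R : Type*) [CommRing R] (d n : ℕ)
    (Λ : Submodule R (Fin (d + n) → R)) : Prop :=
  Module.Free R Λ ∧ Module.rank R Λ = d ∧
    Module.Free R ((Fin (d + n) → R) ⧸ Λ) ∧ Module.rank R ((Fin (d + n) → R) ⧸ Λ) = n

/-- Membership in the Hecke congruence subgroup by blocks `Γ_I`: the entries of the
lower left `n × d` block all lie in the ideal `I`. -/
def MemHecke {R : Type*} [CommRing R] (I : Ideal R) (d n : ℕ)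
    (g : Matrix.SpecialLinearGroup (Fin (d + n)) R) : Prop :=
  ∀ i j : Fin (d + n), d ≤ (i : ℕ) → (j : ℕ) < d →
    (g : Matrix (Fin (d + n)) (Fin (d + n)) R) i j ∈ I

open Module

lemma Module.Free.nonempty_basis_fin_of_rank_eq {R M : Type*} [Ring R] [StrongRankCondition R]
    [AddCommGroup M] [Module R M] [Module.Free R M] {d : ℕ} (h : Module.rank R M = d) :
    Nonempty (Basis (Fin d) R M) :=
  have : Module.Finite R M := Module.rank_lt_aleph0_iff.mp (h ▸ Cardinal.natCast_lt_aleph0)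
  ⟨Module.finBasisOfFinrankEq R M (Module.finrank_eq_of_rank_eq h)⟩

lemma Module.Basis.span_range_coe {ι R M : Type*} [Semiring R] [AddCommMonoid M] [Module R M]
    {p : Submodule R M} (b : Basis ι R p) : Submodule.span R (Set.range fun i => (b i : M)) = p := by
  rw [show (fun i => (b i : M)) = p.subtype ∘ b from rfl, Set.range_comp, Submodule.span_image,
    b.span_eq, Submodule.map_subtype_top]

lemma Matrix.exists_det_eq_one_of_isUnit_det {ι R : Type*} [Fintype ι] [DecidableEq ι]
    [CommRing R] (M : Matrix ι ι R) (hM : IsUnit M.det) (ℓ : ι) :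
    ∃ A : Matrix ι ι R, A.det = 1 ∧ ∀ i j, j ≠ ℓ → A i j = M i j := by
  refine ⟨M.updateCol ℓ ((hM.unit⁻¹ : Rˣ) • fun i => M i ℓ), ?_,
    fun i j hj => by rw [Matrix.updateCol_ne hj]⟩
  rw [Units.smul_def, Matrix.det_updateCol_smul, Matrix.updateCol_eq_self, hM.val_inv_mul]

lemma stdLattice_eq_span (R : Type*) [CommRing R] (d n : ℕ) :
    stdLattice R d n =
      Submodule.span R (Set.range fun j : Fin d => Pi.single (Fin.castAdd n j) 1) := by
  refine le_antisymm (fun x hx => ?_) (Submodule.span_le.mpr ?_)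
  · have hlast : ∀ k : Fin n, x (Fin.natAdd d k) = 0 := fun k => hx _ (by simp)
    rw [pi_eq_sum_univ x, Fin.sum_univ_add]
    simp only [hlast, zero_smul, Finset.sum_const_zero, add_zero]
    exact Submodule.sum_mem _ fun j _ => Submodule.smul_mem _ _
      (Submodule.subset_span ⟨j, by ext; simp [Pi.single_apply, eq_comm]⟩)
  · rintro _ ⟨j, rfl⟩ i hi
    exact Pi.single_eq_of_ne (Fin.ne_of_val_ne (by simp; omega)) 1

lemma map_mulVecLin_stdLattice {R : Type*} [CommRing R] {d n : ℕ}
    (A : Matrix (Fin (d + n)) (Fin (d + n)) R) :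
    (stdLattice R d n).map A.mulVecLin =
      Submodule.span R (Set.range fun j : Fin d => fun i => A i (Fin.castAdd n j)) := by
  rw [stdLattice_eq_span, Submodule.map_span, ← Set.range_comp]
  congr 2
  ext j i
  simp

theorem hecke_transitive_on_horizontal_primitive_lattices_general
    (R : Type*) [CommRing R] [Nontrivial R] (I : Ideal R) (d n : ℕ) (hn : 1 ≤ n)
    (Λ : Submodule R (Fin (d + n) → R)) (hΛ : IsPrimitiveLattice R d n Λ)
    (hΛI : Λ ≤ stdLatticeMod R I d n) :
    ∃ g : Matrix.SpecialLinearGroup (Fin (d + n)) R, MemHecke I d n g ∧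
      Submodule.map
        (Matrix.mulVecLin (g : Matrix (Fin (d + n)) (Fin (d + n)) R))
        (stdLattice R d n) = Λ := by
  obtain ⟨_, hrank, _, hQrank⟩ := hΛ
  obtain ⟨bΛ⟩ := Module.Free.nonempty_basis_fin_of_rank_eq hrank
  obtain ⟨bQ⟩ := Module.Free.nonempty_basis_fin_of_rank_eq hQrank
  let B := (bΛ.sumQuot bQ).reindex finSumFinEquiv
  let M := (Pi.basisFun R (Fin (d + n))).toMatrix B
  obtain ⟨A, hdet, hAM⟩ := M.exists_det_eq_one_of_isUnit_det
    (by rw [← Basis.det_apply]; exact (Pi.basisFun R _).isUnit_det B) (Fin.natAdd d ⟨0, hn⟩)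
  have hcol : ∀ j i, A i (Fin.castAdd n j) = (bΛ j : Fin (d + n) → R) i := fun j i => by
    rw [hAM _ _ (Fin.ne_of_val_ne (by simp; omega))]
    simp [M, B, Basis.toMatrix_apply]
  refine ⟨⟨A, hdet⟩, ?_, ?_⟩
  · intro i j hi hj
    obtain ⟨j, rfl⟩ : ∃ j' : Fin d, j = Fin.castAdd n j' := ⟨⟨j, hj⟩, rfl⟩
    simpa [hcol] using hΛI (bΛ j).2 i hi
  · simpa only [map_mulVecLin_stdLattice, hcol] using bΛ.span_range_coe

/-- The Hecke congruence subgroup `Γ_I` acts transitively on the primitive `d`-lattices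
in `R^D`, `D = d + n`, that are horizontal modulo `I` (i.e. contained in `R^d × I^n`):
every such lattice is the image of `R^d × {0}` by some `g ∈ Γ_I`. -/
theorem hecke_transitive_on_horizontal_primitive_lattices
    (R : Type*) [CommRing R] [Nontrivial R] (I : Ideal R) (d n : ℕ) (hd : 1 ≤ d) (hn : 1 ≤ n)
    (Λ : Submodule R (Fin (d + n) → R)) (hΛ : IsPrimitiveLattice R d n Λ)
    (hΛI : Λ ≤ stdLatticeMod R I d n) :
    ∃ g : Matrix.SpecialLinearGroup (Fin (d + n)) R, MemHecke I d n g ∧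
      Submodule.map
        (Matrix.mulVecLin (g : Matrix (Fin (d + n)) (Fin (d + n)) R))
        (stdLattice R d n) = Λ :=
  hecke_transitive_on_horizontal_primitive_lattices_general R I d n hn Λ hΛ hΛI
end

section
/- Let O be a principal ideal domain (for instance a discrete valuation ring) with fraction field K, let D ≥ 1 and 1 ≤ k ≤ D. For every k-dimensional K-linear subspace W of K^D, there exists g ∈ SL_D(O) (viewed inside SL_D(K)) such that g(K^k × {0}) = W. In particular, SL_D(O), and a fortiori GL_D(O), acts transitively on the Grassmannian of k-dimensional subspaces of K^D. -/
/-!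
The lattice `L = W ∩ O^D` has a Smith normal form relative to `O^D`: a basis `b` of `O^D`, an
injection `f` and nonzero `a i` such that the `a i • b (f i)` form a basis of `L`. As `W` is the
`K`-span of `L`, it is spanned by the `b (f i)`; so the matrix of `GL_D(O)` whose first `k`
columns are these vectors maps `K^k × {0}` onto `W`. Multiplying it on the right by a diagonal
matrix of units puts it in `SL_D(O)` without moving `K^k × {0}`.
-/

/-- The `K`-subspace `K^k × {0}` of `K^D` spanned by the first `k` standard basis
vectors, i.e. the vectors whose last `D - k` coordinates vanish. -/
def stdSubspace (K : Type*) [Field K] (D k : ℕ) : Submodule K (Fin D → K) where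
  carrier := {x | ∀ i : Fin D, k ≤ (i : ℕ) → x i = 0}
  add_mem' := fun ha hb i hi => by simp [ha i hi, hb i hi]
  zero_mem' := fun i _ => rfl
  smul_mem' := fun c x hx i hi => by simp [hx i hi]

open Submodule Set Matrix

section StdSubspace

variable {K : Type*} [Field K] {D k : ℕ}

lemma stdSubspace_eq_span (h : k ≤ D) :
    stdSubspace K D k = span K (range fun j : Fin k => Pi.single (Fin.castLE h j) (1 : K)) := by
  refine le_antisymm (fun x hx => ?_) (span_le.2 ?_)
  · rw [← Finset.univ_sum_single x]
    refine sum_mem fun i _ => ?_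
    by_cases hi : (i : ℕ) < k
    · rw [← mul_one (x i), ← smul_eq_mul, Pi.single_smul]
      exact smul_mem _ _ (subset_span ⟨⟨i, hi⟩, rfl⟩)
    · rw [hx i (not_lt.1 hi), Pi.single_zero]
      exact zero_mem _
  · rintro _ ⟨j, rfl⟩ i hi
    exact Pi.single_eq_of_ne (fun h => by simp [h] at hi; omega) _

lemma map_mulVecLin_stdSubspace (M : Matrix (Fin D) (Fin D) K) (h : k ≤ D) :
    map M.mulVecLin (stdSubspace K D k) =
      span K (range fun j : Fin k => M.col (Fin.castLE h j)) := by
  rw [stdSubspace_eq_span h, map_span, ← range_comp]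
  simp only [Function.comp_def, mulVecLin_apply, mulVec_single_one]

lemma map_diagonal_stdSubspace (d : Fin D → K) (hd : ∀ i, d i ≠ 0) :
    map (diagonal d).mulVecLin (stdSubspace K D k) = stdSubspace K D k := by
  refine le_antisymm (map_le_iff_le_comap.2 fun x hx i hi => ?_) fun x hx => ?_
  · simp [mulVec_diagonal, hx i hi]
  · refine ⟨fun i => (d i)⁻¹ * x i, fun i hi => by simp [hx i hi], ?_⟩
    ext i
    simp [mulVec_diagonal, hd i]

end StdSubspace

lemma Matrix.exists_specialLinearGroup_eq_mul_diagonal {n R : Type*} [Fintype n] [DecidableEq n]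
    [CommRing R] (A : Matrix n n R) (hA : IsUnit A.det) :
    ∃ (g : SpecialLinearGroup n R) (d : n → Rˣ),
      (g : Matrix n n R) = A * diagonal fun i => (d i : R) := by
  cases isEmpty_or_nonempty n
  · exact ⟨⟨A, det_isEmpty⟩, 1, by simp⟩
  · let d := Function.update (1 : n → Rˣ) (Classical.arbitrary n) hA.unit⁻¹
    have hdet : (A * diagonal fun i => (d i : R)).det = 1 := by
      rw [det_mul, det_diagonal, ← Units.coe_prod, Finset.prod_update_of_mem (Finset.mem_univ _)]
      simp
    exact ⟨⟨_, hdet⟩, d, rfl⟩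

lemma Fin.exists_perm_apply_castLE_eq {k D : ℕ} (f : Fin k ↪ Fin D) (h : k ≤ D) :
    ∃ σ : Equiv.Perm (Fin D), ∀ j, σ (Fin.castLE h j) = f j := by
  let e := (Equiv.ofInjective _ (Fin.castLE_injective h)).symm.trans
    (Equiv.ofInjective f f.injective)
  refine ⟨e.extendSubtype, fun j => ?_⟩
  rw [Equiv.extendSubtype_apply_of_mem e _ ⟨j, rfl⟩]
  simp [e]

section Lattice

variable (O K ι : Type*) [CommRing O] [Field K] [Algebra O K]

abbrev piAlgebraMap : (ι → O) →ₗ[O] (ι → K) :=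
  LinearMap.pi fun i => Algebra.linearMap O K ∘ₗ LinearMap.proj i

variable {O K ι} [IsDomain O] [IsPrincipalIdealRing O] [IsFractionRing O K] [Fintype ι]

theorem exists_basis_span_piAlgebraMap_eq (W : Submodule K (ι → K)) :
    ∃ (n : ℕ) (b : Module.Basis ι O (ι → O)) (f : Fin n ↪ ι),
      span K (range (piAlgebraMap O K ι ∘ b ∘ f)) = W := by
  let φ := piAlgebraMap O K ι
  obtain ⟨n, bM, bN, f, a, hsnf⟩ :=
    (comap φ (W.restrictScalars O)).smithNormalForm (Pi.basisFun O ι)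
  have hL : comap φ (W.restrictScalars O) = span O (range (Subtype.val ∘ bN)) := by
    rw [range_comp, ← coe_subtype, span_image, bN.span_eq, Submodule.map_top, range_subtype]
  have ha : ∀ i, IsUnit (algebraMap O K (a i)) := fun i => by
    refine isUnit_iff_ne_zero.2 fun h0 => bN.ne_zero i (Subtype.ext ?_)
    rw [hsnf, (IsFractionRing.to_map_eq_zero_iff).1 h0, zero_smul, ZeroMemClass.coe_zero]
  refine ⟨n, bM, f, ?_⟩
  -- every `K`-subspace of `K^ι` is the localization of its `O`-points
  rw [← (localized'gi K (nonZeroDivisors O) φ).l_u_eq W, hL, localized'_span, ← range_comp,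
    span_range_eq_iSup, span_range_eq_iSup]
  congr! 2 with i
  simp only [Function.comp_apply, hsnf, map_smul, ← algebraMap_smul K (a i)]
  exact (span_singleton_smul_eq (ha i) _).symm

end Lattice

theorem sl_integers_transitive_on_grassmannian_general
    (O K : Type*) [CommRing O] [IsDomain O] [IsPrincipalIdealRing O]
    [Field K] [Algebra O K] [IsFractionRing O K]
    (D k : ℕ)
    (W : Submodule K (Fin D → K)) (hW : Module.finrank K W = k) :
    ∃ g : Matrix.SpecialLinearGroup (Fin D) O,
      Submodule.map
        (Matrix.mulVecLin ((g : Matrix (Fin D) (Fin D) O).map (algebraMap O K)))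
        (stdSubspace K D k) = W := by
  obtain ⟨n, b, f, hbW⟩ := exists_basis_span_piAlgebraMap_eq (O := O) W
  have hn : n = k := by
    have hli : LinearIndependent K (piAlgebraMap O K (Fin D) ∘ b ∘ f) :=
      (b.linearIndependent.of_isLocalizedModule K (nonZeroDivisors O) _).comp f f.injective
    rw [← hW, ← hbW, finrank_span_eq_card hli, Fintype.card_fin]
  subst hn
  have hnD : n ≤ D := by simpa using Fintype.card_le_of_embedding f
  obtain ⟨σ, hσ⟩ := Fin.exists_perm_apply_castLE_eq f hnD
  let A := (Pi.basisFun O (Fin D)).toMatrix (b.reindex σ.symm)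
  obtain ⟨g, d, hg⟩ := A.exists_specialLinearGroup_eq_mul_diagonal
    (by rw [← Module.Basis.det_apply]; exact (Pi.basisFun O (Fin D)).isUnit_det _)
  refine ⟨g, ?_⟩
  rw [hg, Matrix.map_mul, mulVecLin_mul, map_comp, diagonal_map (map_zero _),
    map_diagonal_stdSubspace _ fun i => ((d i).isUnit.map _).ne_zero,
    map_mulVecLin_stdSubspace _ hnD, ← hbW]
  congr
  ext j i
  simp [A, Module.Basis.toMatrix_apply, hσ]

/-- Let `O` be a principal ideal domain with fraction field `K` and `1 ≤ k ≤ D`. Then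
`SL_D(O)` acts transitively on the Grassmannian of `k`-dimensional subspaces of `K^D`:
every `k`-dimensional subspace `W` of `K^D` is the image of `K^k × {0}` by some
`g ∈ SL_D(O)`. -/
theorem sl_integers_transitive_on_grassmannian
    (O K : Type*) [CommRing O] [IsDomain O] [IsPrincipalIdealRing O]
    [Field K] [Algebra O K] [IsFractionRing O K]
    (D k : ℕ) (hk : 1 ≤ k) (hkD : k ≤ D)
    (W : Submodule K (Fin D → K)) (hW : Module.finrank K W = k) :
    ∃ g : Matrix.SpecialLinearGroup (Fin D) O,
      Submodule.map
        (Matrix.mulVecLin ((g : Matrix (Fin D) (Fin D) O).map (algebraMap O K)))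
        (stdSubspace K D k) = W :=
  sl_integers_transitive_on_grassmannian_general O K D k W hW
end
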